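/- arXiv:1806.03551 — 3 statements merged into one kernel-verified Lean document; each statement's English description precedes it below -/
import Mathlib

section
/- Let s ∈ ℝ and let C be the UQ × UQ matrix with 1 on the diagonal, with off-diagonal entries s at positions ((q,u),(q',u')) where q = q' or u = u' (but not both), and 0 elsewhere (indexing pairs (q,u) with q ∈ {1,...,Q}, u ∈ {1,...,U}). Suppose C is invertible. Then C⁻¹ = 1_{Q×Q} ⊗ A + I_{Q×Q} ⊗ B, where A is the U×U matrix with c on the diagonal and d off-diagonal, B is the U×U matrix with a−c on the diagonal and b−d off-diagonal, and (a,b,c,d) is the unique solution of the linear system: a + (U−1)sb + (Q−1)sc = 1; sa + ((U−2)s+1)b + (Q−1)sd = 0; sa + ((Q−2)s+1)c + (U−1)sd = 0; sb + sc + ((U+Q−4)s+1)d = 0. -/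
/-!
`C` and the proposed inverse both lie in the algebra of `(Q × U)`-indexed matrices whose entry at
`((p, u), (q, v))` depends only on whether `p = q` and whether `u = v` (the Bose–Mesner algebra of
the rook's graph `K_Q □ K_U`). It is spanned by `J ⊗ J`, `J ⊗ I`, `I ⊗ J`, `I ⊗ I` (`J` the
all-ones matrix), so it is closed under multiplication because `J * J = n • J`. The four entries
of the product of `C` with the proposed inverse are the left-hand sides of the linear system, hence
the product is `1`, and a right inverse of a square matrix is its inverse.
-/

open Matrix Kronecker

def allOnes (n : ℕ) : Matrix (Fin n) (Fin n) ℝ := Matrix.of fun _ _ => 1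

def rookMatrix (Q U : ℕ) (a b c d : ℝ) : Matrix (Fin Q × Fin U) (Fin Q × Fin U) ℝ :=
  Matrix.of fun i j =>
    if i.1 = j.1 then (if i.2 = j.2 then a else b) else (if i.2 = j.2 then c else d)

theorem allOnes_mul_allOnes (n : ℕ) : allOnes n * allOnes n = (n : ℝ) • allOnes n := by
  ext i j
  simp [allOnes, Matrix.mul_apply]

theorem of_ite_eq_smul_one_add_smul_allOnes (n : ℕ) (x y : ℝ) :
    (Matrix.of fun i j : Fin n => if i = j then x else y) = (x - y) • 1 + y • allOnes n := by
  ext i j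
  by_cases h : i = j <;> simp [h, allOnes, one_apply]

theorem rookMatrix_eq_kronecker (Q U : ℕ) (a b c d : ℝ) :
    rookMatrix Q U a b c d = d • (allOnes Q ⊗ₖ allOnes U) + (c - d) • (allOnes Q ⊗ₖ 1) +
      (b - d) • (1 ⊗ₖ allOnes U) + (a - b - c + d) • 1 := by
  ext ⟨p, u⟩ ⟨q, v⟩
  by_cases hpq : p = q <;> by_cases huv : u = v <;>
    simp [rookMatrix, allOnes, hpq, huv, one_apply]; ring

theorem rookMatrix_one_zero (Q U : ℕ) : rookMatrix Q U 1 0 0 0 = 1 := by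
  ext ⟨p, u⟩ ⟨q, v⟩
  by_cases hpq : p = q <;> by_cases huv : u = v <;> simp [rookMatrix, hpq, huv, one_apply]

theorem rookMatrix_mul_rookMatrix (Q U : ℕ) (a b c d a' b' c' d' : ℝ) :
    rookMatrix Q U a b c d * rookMatrix Q U a' b' c' d' =
      rookMatrix Q U
        (a * a' + (U - 1) * b * b' + (Q - 1) * (c * c' + (U - 1) * d * d'))
        (a * b' + b * a' + (U - 2) * b * b' + (Q - 1) * (c * d' + d * c' + (U - 2) * d * d'))
        (a * c' + c * a' + (Q - 2) * c * c' + (U - 1) * (b * d' + d * b' + (Q - 2) * d * d'))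
        (a * d' + d * a' + b * c' + c * b' + (U - 2) * (b * d' + d * b') +
          (Q - 2) * (c * d' + d * c') + (Q - 2) * (U - 2) * d * d') := by
  simp only [rookMatrix_eq_kronecker, Matrix.add_mul, Matrix.mul_add, Matrix.smul_mul,
    Matrix.mul_smul, Matrix.one_mul, Matrix.mul_one, ← mul_kronecker_mul, allOnes_mul_allOnes,
    smul_kronecker, kronecker_smul, smul_smul]
  module

theorem smul_add_smul_one_eq_rookMatrix (Q U : ℕ) (s : ℝ) :
    s • (allOnes Q ⊗ₖ (1 : Matrix (Fin U) (Fin U) ℝ) + (1 : Matrix (Fin Q) (Fin Q) ℝ) ⊗ₖ allOnes U) +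
      (1 - 2 * s) • 1 = rookMatrix Q U 1 s s 0 := by
  rw [rookMatrix_eq_kronecker]
  module

theorem allOnes_kronecker_add_one_kronecker_eq_rookMatrix (Q U : ℕ) (a b c d : ℝ) :
    allOnes Q ⊗ₖ (Matrix.of fun i j : Fin U => if i = j then c else d) +
        (1 : Matrix (Fin Q) (Fin Q) ℝ) ⊗ₖ (Matrix.of fun i j : Fin U => if i = j then a - c else b - d) =
      rookMatrix Q U a b c d := by
  simp only [rookMatrix_eq_kronecker, of_ite_eq_smul_one_add_smul_allOnes, kronecker_add,
    kronecker_smul, one_kronecker_one]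
  module

theorem rasch_Cy_inverse_structure_general (U Q : ℕ) (s : ℝ)
    (C : Matrix (Fin Q × Fin U) (Fin Q × Fin U) ℝ)
    (hC : C = s • (allOnes Q ⊗ₖ (1 : Matrix (Fin U) (Fin U) ℝ) +
        (1 : Matrix (Fin Q) (Fin Q) ℝ) ⊗ₖ allOnes U) + (1 - 2 * s) • 1)
    (a b c d : ℝ)
    (h1 : a + (U - 1 : ℝ) * s * b + (Q - 1 : ℝ) * s * c = 1)
    (h2 : s * a + (((U : ℝ) - 2) * s + 1) * b + (Q - 1 : ℝ) * s * d = 0)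
    (h3 : s * a + (((Q : ℝ) - 2) * s + 1) * c + (U - 1 : ℝ) * s * d = 0)
    (h4 : s * b + s * c + (((U : ℝ) + (Q : ℝ) - 4) * s + 1) * d = 0)
    (A B : Matrix (Fin U) (Fin U) ℝ)
    (hA : A = Matrix.of fun i j => if i = j then c else d)
    (hB : B = Matrix.of fun i j => if i = j then a - c else b - d) :
    C⁻¹ = allOnes Q ⊗ₖ A + (1 : Matrix (Fin Q) (Fin Q) ℝ) ⊗ₖ B := by
  subst hC hA hB
  rw [smul_add_smul_one_eq_rookMatrix, allOnes_kronecker_add_one_kronecker_eq_rookMatrix]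
  refine inv_eq_right_inv ?_
  rw [rookMatrix_mul_rookMatrix, ← rookMatrix_one_zero]
  congr 1
  · linear_combination h1
  · linear_combination h2
  · linear_combination h3
  · linear_combination h4

/-- Let `C` be the `UQ × UQ` matrix with `1` on the diagonal, `s` at off-diagonal
positions sharing exactly one of the two indices, and `0` elsewhere, i.e.
`C = s(1_{Q×Q} ⊗ I_U + I_Q ⊗ 1_{U×U}) + (1-2s)I`.  If `C` is invertible and `(a,b,c,d)`
solves the stated linear system, then `C⁻¹ = 1_{Q×Q} ⊗ A + I_{Q×Q} ⊗ B` with `A` having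
`c` on the diagonal and `d` off it, and `B` having `a-c` on the diagonal and `b-d` off it. -/
theorem rasch_Cy_inverse_structure (U Q : ℕ) (hU : 2 ≤ U) (hQ : 2 ≤ Q) (s : ℝ)
    (C : Matrix (Fin Q × Fin U) (Fin Q × Fin U) ℝ)
    (hC : C = s • (allOnes Q ⊗ₖ (1 : Matrix (Fin U) (Fin U) ℝ) +
        (1 : Matrix (Fin Q) (Fin Q) ℝ) ⊗ₖ allOnes U) + (1 - 2 * s) • 1)
    (hInv : IsUnit C)
    (a b c d : ℝ)
    (h1 : a + (U - 1 : ℝ) * s * b + (Q - 1 : ℝ) * s * c = 1)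
    (h2 : s * a + (((U : ℝ) - 2) * s + 1) * b + (Q - 1 : ℝ) * s * d = 0)
    (h3 : s * a + (((Q : ℝ) - 2) * s + 1) * c + (U - 1 : ℝ) * s * d = 0)
    (h4 : s * b + s * c + (((U : ℝ) + (Q : ℝ) - 4) * s + 1) * d = 0)
    (A B : Matrix (Fin U) (Fin U) ℝ)
    (hA : A = Matrix.of fun i j => if i = j then c else d)
    (hB : B = Matrix.of fun i j => if i = j then a - c else b - d) :
    C⁻¹ = allOnes Q ⊗ₖ A + (1 : Matrix (Fin Q) (Fin Q) ℝ) ⊗ₖ B :=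
  rasch_Cy_inverse_structure_general U Q s C hC a b c d h1 h2 h3 h4 A B hA hB
end

section
/- For a standard Gaussian w and constant c ∈ ℝ, E[w · sign(w + c)] = 2N(c; 0, 1), where N(·;0,1) is the standard normal density; more generally for jointly Gaussian (x, z) with z ~ N(z̄, σ_z²) and Cov(x, z) = γ, E[(x − x̄) sign(z)] = 2γ N(z̄/σ_z; 0,1)/σ_z. -/
open MeasureTheory Real

/-- Sign function taking values ±1. -/
noncomputable def sgn (z : ℝ) : ℝ := if 0 < z then 1 else -1

/-- Standard normal density `N(t; 0, 1)`. -/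
noncomputable def stdNormalPDF (t : ℝ) : ℝ :=
  (Real.sqrt (2 * Real.pi))⁻¹ * Real.exp (-t ^ 2 / 2)

/-- Density of a bivariate Gaussian with means `xbar, zbar`, standard deviations
`σx, σz` and correlation `ρ`. -/
noncomputable def bivariateDensity (xbar zbar σx σz ρ x z : ℝ) : ℝ :=
  (2 * Real.pi * σx * σz * Real.sqrt (1 - ρ ^ 2))⁻¹ *
    Real.exp (-(((x - xbar) / σx) ^ 2 - 2 * ρ * ((x - xbar) / σx) * ((z - zbar) / σz)
        + ((z - zbar) / σz) ^ 2) / (2 * (1 - ρ ^ 2)))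

open ProbabilityTheory Set Filter Topology

/-!
Since `φ' = -t φ` for the standard normal density `φ`, `∫_a^∞ t φ(t) dt = φ(a)`; writing
`sgn = 2 · 1_{(0,∞)} - 1` and using `∫ t φ(t) dt = 0` gives `E[w sgn(w + c)] = 2 φ(-c) = 2 φ(c)`.

The bivariate density factors as the `N(z̄, σz²)` density of `z` times the
`N(x̄ + ρ σx (z - z̄)/σz, σx² (1 - ρ²))` density of `x` given `z`. Integrating `x` out first leaves
`ρ σx E[sgn(z) (z - z̄)/σz]`, which the substitution `z = z̄ + σz t` turns into the first identity
with `c = z̄/σz`; finally `γ = ρ σx σz`.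
-/

lemma stdNormalPDF_eq_gaussianPDFReal : stdNormalPDF = gaussianPDFReal 0 1 := by
  ext t
  simp [stdNormalPDF, gaussianPDFReal]

lemma stdNormalPDF_neg (t : ℝ) : stdNormalPDF (-t) = stdNormalPDF t := by
  simp [stdNormalPDF]

lemma integral_gaussianReal_zero_one_eq (f : ℝ → ℝ) :
    ∫ w, f w ∂gaussianReal 0 1 = ∫ w, f w * stdNormalPDF w := by
  simp only [integral_gaussianReal_eq_integral_smul one_ne_zero, smul_eq_mul,
    stdNormalPDF_eq_gaussianPDFReal, mul_comm]

lemma integrable_stdNormalPDF : Integrable stdNormalPDF :=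
  stdNormalPDF_eq_gaussianPDFReal ▸ integrable_gaussianPDFReal 0 1

lemma integral_stdNormalPDF : ∫ t, stdNormalPDF t = 1 :=
  stdNormalPDF_eq_gaussianPDFReal ▸ integral_gaussianPDFReal_eq_one 0 one_ne_zero

lemma integrable_mul_stdNormalPDF : Integrable fun t ↦ t * stdNormalPDF t := by
  simpa [stdNormalPDF, div_eq_inv_mul, mul_left_comm] using
    (integrable_mul_exp_neg_mul_sq (b := 1 / 2) (by norm_num)).const_mul (√(2 * π))⁻¹

lemma integral_mul_stdNormalPDF : ∫ t, t * stdNormalPDF t = 0 := by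
  rw [← integral_gaussianReal_zero_one_eq fun t ↦ t]
  exact integral_id_gaussianReal

lemma hasDerivAt_stdNormalPDF (t : ℝ) :
    HasDerivAt stdNormalPDF (-(t * stdNormalPDF t)) t := by
  have h : HasDerivAt (fun t : ℝ ↦ -t ^ 2 / 2) (-t) t :=
    ((hasDerivAt_pow 2 t).fun_neg.div_const 2).congr_deriv (by norm_num; ring)
  exact (h.exp.const_mul _).congr_deriv (by simp only [stdNormalPDF]; ring)

lemma tendsto_stdNormalPDF_atTop : Tendsto stdNormalPDF atTop (𝓝 0) := by
  have h : Tendsto (fun t : ℝ ↦ -t ^ 2 / 2) atTop atBot :=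
    tendsto_neg_atTop_atBot.comp ((tendsto_pow_atTop two_ne_zero).atTop_div_const two_pos)
      |>.congr fun t ↦ by simp [neg_div]
  have := (tendsto_exp_atBot.comp h).const_mul (√(2 * π))⁻¹
  rwa [mul_zero] at this

lemma integral_Ioi_mul_stdNormalPDF (a : ℝ) :
    ∫ t in Ioi a, t * stdNormalPDF t = stdNormalPDF a := by
  rw [integral_Ioi_of_hasDerivAt_of_tendsto' (f := fun t ↦ -stdNormalPDF t)
    (fun t _ ↦ by simpa using (hasDerivAt_stdNormalPDF t).fun_neg)
    integrable_mul_stdNormalPDF.integrableOn (by simpa using tendsto_stdNormalPDF_atTop.neg)]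
  ring

lemma integral_mul_sgn_add_mul_stdNormalPDF (c : ℝ) :
    ∫ t, t * sgn (t + c) * stdNormalPDF t = 2 * stdNormalPDF c := by
  have hsplit : ∀ t, t * sgn (t + c) * stdNormalPDF t =
      2 * (Ioi (-c)).indicator (fun t ↦ t * stdNormalPDF t) t - t * stdNormalPDF t := by
    intro t
    by_cases h : 0 < t + c
    · simp [sgn, h, show -c < t by linarith]; ring
    · simp [sgn, h, show ¬ -c < t by linarith]
  simp only [hsplit]
  rw [integral_sub ((integrable_mul_stdNormalPDF.indicator measurableSet_Ioi).const_mul 2)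
    integrable_mul_stdNormalPDF, integral_const_mul, integral_indicator measurableSet_Ioi,
    integral_Ioi_mul_stdNormalPDF, integral_mul_stdNormalPDF, stdNormalPDF_neg, sub_zero]

lemma integral_mul_scaled_stdNormalPDF (f : ℝ → ℝ) (m : ℝ) {s : ℝ} (hs : 0 < s) :
    ∫ x, f x * (s⁻¹ * stdNormalPDF ((x - m) / s)) = ∫ t, f (m + s * t) * stdNormalPDF t := by
  set g : ℝ → ℝ := fun t ↦ f (m + s * t) * stdNormalPDF t
  have hg : ∀ x, f x * (s⁻¹ * stdNormalPDF ((x - m) / s)) = s⁻¹ * g ((x - m) / s) := by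
    intro x
    simp only [g, mul_div_cancel₀ _ hs.ne', add_sub_cancel]
    ring
  simp only [hg]
  rw [integral_const_mul, integral_sub_right_eq_self (fun x ↦ g (x / s)), Measure.integral_comp_div,
    abs_of_pos hs, smul_eq_mul, inv_mul_cancel_left₀ hs.ne']

lemma integral_sub_mul_scaled_stdNormalPDF (a m : ℝ) {s : ℝ} (hs : 0 < s) :
    ∫ x, (x - a) * (s⁻¹ * stdNormalPDF ((x - m) / s)) = m - a := by
  have h : ∀ t, (m + s * t - a) * stdNormalPDF t =
      (m - a) * stdNormalPDF t + s * (t * stdNormalPDF t) := fun t ↦ by ring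
  rw [integral_mul_scaled_stdNormalPDF _ m hs]
  simp only [h]
  rw [integral_add (integrable_stdNormalPDF.const_mul _) (integrable_mul_stdNormalPDF.const_mul _),
    integral_const_mul, integral_const_mul, integral_stdNormalPDF, integral_mul_stdNormalPDF]
  ring

lemma integrable_comp_sub_div {g : ℝ → ℝ} (hg : Integrable g) (m : ℝ) {s : ℝ} (hs : s ≠ 0) :
    Integrable fun x ↦ g ((x - m) / s) :=
  (hg.comp_div hs).comp_sub_right m

lemma sgn_mul_of_pos {s : ℝ} (hs : 0 < s) (z : ℝ) : sgn (s * z) = sgn z := by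
  simp [sgn, mul_pos_iff_of_pos_left hs]

lemma measurable_sgn : Measurable sgn :=
  Measurable.ite measurableSet_Ioi measurable_const measurable_const

section Bivariate

variable {xbar zbar σx σz ρ : ℝ}

lemma bivariateDensity_eq_mul (hσx : 0 < σx) (hσz : 0 < σz) (hρ : ρ ^ 2 < 1) (x z : ℝ) :
    bivariateDensity xbar zbar σx σz ρ x z =
      σz⁻¹ * stdNormalPDF ((z - zbar) / σz) *
        ((σx * √(1 - ρ ^ 2))⁻¹ *
          stdNormalPDF ((x - (xbar + ρ * σx * ((z - zbar) / σz))) / (σx * √(1 - ρ ^ 2)))) := by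
  rw [bivariateDensity, stdNormalPDF, stdNormalPDF]
  have hρ' : 0 < 1 - ρ ^ 2 := by linarith
  set q := √(1 - ρ ^ 2)
  have hq2 : q ^ 2 = 1 - ρ ^ 2 := sq_sqrt hρ'.le
  have hr : √(2 * π) ^ 2 = 2 * π := sq_sqrt (by positivity)
  have hw : (x - (xbar + ρ * σx * ((z - zbar) / σz))) / (σx * q) =
      ((x - xbar) / σx - ρ * ((z - zbar) / σz)) / q := by
    field_simp; ring
  have hexp : ∀ u t : ℝ, -(u ^ 2 - 2 * ρ * u * t + t ^ 2) / (2 * (1 - ρ ^ 2)) =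
      -t ^ 2 / 2 + -((u - ρ * t) / q) ^ 2 / 2 := by
    intro u t; rw [div_pow, hq2]; field_simp; ring
  rw [hw, hexp, exp_add]
  field_simp
  rw [hr]

lemma bivariateDensity_le (hσx : 0 < σx) (hσz : 0 < σz) (hρ : ρ ^ 2 < 1) (x z : ℝ) :
    bivariateDensity xbar zbar σx σz ρ x z ≤ (2 * π * σx * σz * √(1 - ρ ^ 2))⁻¹ *
      (exp (-(1 / 4) * ((x - xbar) / σx) ^ 2) * exp (-(1 / 4) * ((z - zbar) / σz) ^ 2)) := by
  rw [bivariateDensity, ← exp_add]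
  gcongr
  set u := (x - xbar) / σx
  set t := (z - zbar) / σz
  -- the quadratic form is at least `(1 - |ρ|) (u² + t²)`, and `1 - ρ² ≤ 2 (1 - |ρ|)`
  have hquad : (u ^ 2 + t ^ 2) / 4 ≤ (u ^ 2 - 2 * ρ * u * t + t ^ 2) / (2 * (1 - ρ ^ 2)) := by
    rw [div_le_div_iff₀ (by norm_num) (by linarith)]
    nlinarith [sq_nonneg (u - ρ * t), sq_nonneg (ρ * u - t), sq_nonneg u, sq_nonneg t]
  rw [neg_div]
  linarith

lemma integrable_sub_mul_sgn_mul_bivariateDensity (hσx : 0 < σx) (hσz : 0 < σz)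
    (hρ : ρ ^ 2 < 1) :
    Integrable fun p : ℝ × ℝ ↦
      (p.1 - xbar) * sgn p.2 * bivariateDensity xbar zbar σx σz ρ p.1 p.2 := by
  set C := (2 * π * σx * σz * √(1 - ρ ^ 2))⁻¹
  have hb : (0 : ℝ) < 1 / 4 := by norm_num
  have hx := integrable_comp_sub_div (integrable_mul_exp_neg_mul_sq hb).norm xbar hσx.ne'
  have hz := integrable_comp_sub_div (integrable_exp_neg_mul_sq hb) zbar hσz.ne'
  have hdom : Integrable (fun p : ℝ × ℝ ↦ C * σx * (‖(p.1 - xbar) / σx *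
      exp (-(1 / 4) * ((p.1 - xbar) / σx) ^ 2)‖ * exp (-(1 / 4) * ((p.2 - zbar) / σz) ^ 2))) := by
    rw [Measure.volume_eq_prod]
    exact (hx.mul_prod hz).const_mul _
  have hmeas : Measurable fun p : ℝ × ℝ ↦
      (p.1 - xbar) * sgn p.2 * bivariateDensity xbar zbar σx σz ρ p.1 p.2 := by
    have hcont : Continuous fun p : ℝ × ℝ ↦ bivariateDensity xbar zbar σx σz ρ p.1 p.2 := by
      unfold bivariateDensity; fun_prop
    exact ((measurable_fst.sub_const _).mul (measurable_sgn.comp measurable_snd)).mul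
      hcont.measurable
  refine hdom.mono' hmeas.aestronglyMeasurable (.of_forall fun ⟨x, z⟩ ↦ ?_)
  have hd : 0 ≤ bivariateDensity xbar zbar σx σz ρ x z := by unfold bivariateDensity; positivity
  have hsgn : |sgn z| = 1 := by unfold sgn; split_ifs <;> norm_num
  calc ‖(x - xbar) * sgn z * bivariateDensity xbar zbar σx σz ρ x z‖
      = |x - xbar| * bivariateDensity xbar zbar σx σz ρ x z := by
        simp only [norm_mul, norm_of_nonneg hd, Real.norm_eq_abs, hsgn, mul_one]
    _ ≤ |x - xbar| * (C * (exp (-(1 / 4) * ((x - xbar) / σx) ^ 2) *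
          exp (-(1 / 4) * ((z - zbar) / σz) ^ 2))) := by
        gcongr; exact bivariateDensity_le hσx hσz hρ x z
    _ = _ := by
        rw [norm_mul, norm_of_nonneg (exp_pos _).le, Real.norm_eq_abs, abs_div, abs_of_pos hσx]
        field_simp

lemma integral_sub_mul_sgn_mul_bivariateDensity (hσx : 0 < σx) (hσz : 0 < σz) (hρ : ρ ^ 2 < 1) :
    ∫ p : ℝ × ℝ, (p.1 - xbar) * sgn p.2 * bivariateDensity xbar zbar σx σz ρ p.1 p.2 =
      2 * ρ * σx * stdNormalPDF (zbar / σz) := by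
  have hint := integrable_sub_mul_sgn_mul_bivariateDensity (xbar := xbar) (zbar := zbar) hσx hσz hρ
  rw [Measure.volume_eq_prod] at hint ⊢
  rw [integral_prod_symm _ hint]
  have hinner : ∀ z, ∫ x, (x - xbar) * sgn z * bivariateDensity xbar zbar σx σz ρ x z =
      sgn z * (ρ * σx * ((z - zbar) / σz)) * (σz⁻¹ * stdNormalPDF ((z - zbar) / σz)) := by
    intro z
    set s := σx * √(1 - ρ ^ 2)
    have hs : 0 < s := mul_pos hσx (sqrt_pos.2 (by linarith))
    have hfactor : ∀ x, (x - xbar) * sgn z * bivariateDensity xbar zbar σx σz ρ x z =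
        sgn z * (σz⁻¹ * stdNormalPDF ((z - zbar) / σz)) *
          ((x - xbar) * (s⁻¹ * stdNormalPDF ((x - (xbar + ρ * σx * ((z - zbar) / σz))) / s))) := by
      intro x; rw [bivariateDensity_eq_mul hσx hσz hρ]; ring
    simp only [hfactor]
    rw [integral_const_mul, integral_sub_mul_scaled_stdNormalPDF _ _ hs]
    ring
  have houter : ∀ t, sgn (zbar + σz * t) * (ρ * σx * ((zbar + σz * t - zbar) / σz)) *
      stdNormalPDF t = ρ * σx * (t * sgn (t + zbar / σz) * stdNormalPDF t) := by
    intro t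
    have hsgn : sgn (zbar + σz * t) = sgn (t + zbar / σz) := by
      rw [← sgn_mul_of_pos hσz (t + zbar / σz), mul_add, mul_div_cancel₀ _ hσz.ne', add_comm]
    rw [hsgn, add_sub_cancel_left, mul_div_cancel_left₀ _ hσz.ne']
    ring
  simp only [hinner]
  rw [integral_mul_scaled_stdNormalPDF _ zbar hσz]
  simp only [houter]
  rw [integral_const_mul, integral_mul_sgn_add_mul_stdNormalPDF]
  ring

end Bivariate

/-- Stein's-lemma-type identity: for a standard Gaussian `w` and constant `c`,
`E[w sign(w + c)] = 2 N(c; 0, 1)`; more generally, for jointly Gaussian `(x, z)` with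
`z ~ N(z̄, σ_z²)` and `Cov(x, z) = γ`, `E[(x − x̄) sign(z)] = 2 γ N(z̄/σ_z; 0, 1) / σ_z`. -/
theorem stein_sign_identity :
    (∀ c : ℝ, (∫ w, w * sgn (w + c) ∂(ProbabilityTheory.gaussianReal 0 1)) =
        2 * stdNormalPDF c) ∧
    (∀ xbar zbar σx σz γ : ℝ, 0 < σx → 0 < σz →
      ∀ ρ : ℝ, ρ = γ / (σx * σz) → ρ ∈ Set.Ioo (-1 : ℝ) 1 →
      (∫ p : ℝ × ℝ, (p.1 - xbar) * sgn p.2 * bivariateDensity xbar zbar σx σz ρ p.1 p.2) =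
        2 * γ * stdNormalPDF (zbar / σz) / σz) := by
  refine ⟨fun c ↦ ?_, fun xbar zbar σx σz γ hσx hσz ρ hργ hρ ↦ ?_⟩
  · rw [integral_gaussianReal_zero_one_eq]
    exact integral_mul_sgn_add_mul_stdNormalPDF c
  · have hρ2 : ρ ^ 2 < 1 := (sq_lt_one_iff_abs_lt_one ρ).2 (abs_lt.2 hρ)
    have hγ : γ = ρ * σx * σz := by rw [hργ]; field_simp
    rw [integral_sub_mul_sgn_mul_bivariateDensity hσx hσz hρ2, hγ]
    field_simp
end

section
/- Let U, Q ≥ 2 and σ² > 0, and set s = (2/π)arcsin(σ²/(2σ²+1)). Then the per-user MSE formula MSE_a = σ²(1 − (2/π)(σ²/(2σ²+1)) · (sQ(Q+U−3)+1)/((s(Q−2)+1)(s(Q+U−2)+1))) satisfies 0 ≤ MSE_a ≤ σ². -/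
lemma rasch_key (q u s c : ℝ) (hq : 2 ≤ q) (hu : 2 ≤ u)
    (hs0 : 0 < s) (hs3 : s ≤ 1/3) (hc0 : 0 < c) (hcs : c ≤ s) (hc1 : c < 1) :
    0 ≤ c * ((s * q * (q + u - 3) + 1) / ((s * (q - 2) + 1) * (s * (q + u - 2) + 1))) ∧
    c * ((s * q * (q + u - 3) + 1) / ((s * (q - 2) + 1) * (s * (q + u - 2) + 1))) ≤ 1 := by
  have hd1 : (0:ℝ) < s * (q - 2) + 1 := by nlinarith
  have hd2 : (0:ℝ) < s * (q + u - 2) + 1 := by nlinarith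
  have hd : (0:ℝ) < (s * (q - 2) + 1) * (s * (q + u - 2) + 1) := mul_pos hd1 hd2
  have hn : (0:ℝ) ≤ s * q * (q + u - 3) + 1 := by
    nlinarith [mul_nonneg (mul_nonneg hs0.le (by linarith : (0:ℝ) ≤ q)) (by linarith : (0:ℝ) ≤ q + u - 3)]
  constructor
  · positivity
  · rw [← mul_div_assoc, div_le_one hd]
    nlinarith [mul_nonneg (mul_nonneg (sub_nonneg.2 hcs) hs0.le)
        (by nlinarith : (0:ℝ) ≤ q * (q + u - 3)),
      mul_nonneg (mul_nonneg hs0.le (by linarith : (0:ℝ) ≤ 1/3 - s))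
        (by nlinarith : (0:ℝ) ≤ q + 2*u - 4),
      mul_nonneg hs0.le (by nlinarith : (0:ℝ) ≤ 2*q + u - 4)]

/-- For `U, Q ≥ 2`, `σ² > 0`, and `s = (2/π) arcsin(σ²/(2σ²+1))`, the per-user MSE
`MSE_a = σ²(1 − (2/π)(σ²/(2σ²+1)) · (sQ(Q+U−3)+1)/((s(Q−2)+1)(s(Q+U−2)+1)))`
satisfies `0 ≤ MSE_a ≤ σ²`. -/
theorem rasch_mse_bounds (U Q : ℕ) (hU : 2 ≤ U) (hQ : 2 ≤ Q) (σ2 : ℝ) (hσ2 : 0 < σ2)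
    (s : ℝ) (hs : s = (2 / Real.pi) * Real.arcsin (σ2 / (2 * σ2 + 1)))
    (MSEa : ℝ)
    (hMSEa : MSEa = σ2 * (1 - (2 / Real.pi) * (σ2 / (2 * σ2 + 1)) *
      ((s * Q * ((Q : ℝ) + U - 3) + 1) /
        ((s * ((Q : ℝ) - 2) + 1) * (s * ((Q : ℝ) + U - 2) + 1))))) :
    0 ≤ MSEa ∧ MSEa ≤ σ2 := by
  have hπ : (0:ℝ) < Real.pi := Real.pi_pos
  set x : ℝ := σ2 / (2 * σ2 + 1) with hx
  have hden : (0:ℝ) < 2 * σ2 + 1 := by linarith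
  have hx0 : 0 < x := div_pos hσ2 hden
  have hx2 : x < 1/2 := by
    rw [hx, div_lt_iff₀ hden]; linarith
  have hx1 : x ≤ 1 := by linarith
  have harc0 : 0 < Real.arcsin x := Real.arcsin_pos.2 hx0
  have harc_le : Real.arcsin x ≤ Real.pi / 6 := by
    have : Real.arcsin x ≤ Real.arcsin (1/2) := Real.monotone_arcsin (by linarith)
    calc Real.arcsin x ≤ Real.arcsin (1/2) := this
      _ = Real.pi / 6 := by
          rw [show (1/2 : ℝ) = Real.sin (Real.pi/6) by rw [Real.sin_pi_div_six]]
          exact Real.arcsin_sin (by linarith [Real.pi_gt_three]) (by linarith [Real.pi_gt_three])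
  have hxarc : x ≤ Real.arcsin x := by
    have := Real.sin_le harc0.le
    rwa [Real.sin_arcsin (by linarith) hx1] at this
  set c : ℝ := (2 / Real.pi) * x with hc
  have hs0 : 0 < s := by rw [hs]; positivity
  have hs3 : s ≤ 1/3 := by
    rw [hs]
    rw [div_mul_eq_mul_div, div_le_iff₀ hπ]
    nlinarith
  have hc0 : 0 < c := by rw [hc]; positivity
  have hcs : c ≤ s := by
    rw [hc, hs]
    have h2π : 0 < 2 / Real.pi := by positivity
    exact mul_le_mul_of_nonneg_left hxarc h2π.le
  have hc1 : c < 1 := lt_of_le_of_lt hcs (by linarith)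
  have hq : (2:ℝ) ≤ (Q:ℝ) := by exact_mod_cast hQ
  have hu : (2:ℝ) ≤ (U:ℝ) := by exact_mod_cast hU
  obtain ⟨h1, h2⟩ := rasch_key (Q:ℝ) (U:ℝ) s c hq hu hs0 hs3 hc0 hcs hc1
  constructor
  · rw [hMSEa]
    have : c * ((s * Q * ((Q:ℝ) + U - 3) + 1) /
        ((s * ((Q:ℝ) - 2) + 1) * (s * ((Q:ℝ) + U - 2) + 1))) ≤ 1 := h2
    nlinarith
  · rw [hMSEa]
    nlinarith
end
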